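/- There exists a function ξ : U² → ℂ, analytic in the pair (a,b), such that for all (a,b) ∈ U², g((1−a)/(1−b)) = (a−b)² ξ(a,b). -/

import Mathlib

open Complex Finset MeasureTheory
open scoped Real Classical

noncomputable section

/-- The set of primes `p ≤ y`. -/
def primesLe (y : ℝ) : Finset ℕ := (Finset.Iic ⌊y⌋₊).filter Nat.Prime

/-- `α` satisfies the saddle-point equation `∑_{p ≤ y} log p/(p^α − 1) = log x`. -/
def saddleEq (x y α : ℝ) : Prop :=
  ∑ p ∈ primesLe y, Real.log p / ((p : ℝ) ^ α - 1) = Real.log x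

/-- `ū = min{u, π(y)}` where `u = log x/log y`. -/
def ubar (x y : ℝ) : ℝ := min (Real.log x / Real.log y) ((primesLe y).card)

def sigma2 (y α : ℝ) : ℝ :=
  ∑ p ∈ primesLe y, (Real.log p) ^ 2 * (p : ℝ) ^ α / ((p : ℝ) ^ α - 1) ^ 2

def sigma2t (y α : ℝ) : ℝ :=
  ∑ p ∈ primesLe y, (Real.log p) ^ 2 / ((p : ℝ) ^ α - 1) ^ 2

/-- `ϱ = (1/2)(σ₂ − σ̃₂/3)^{1/2}`. -/
def rhoXY (y α : ℝ) : ℝ := (1 / 2) * Real.sqrt (sigma2 y α - sigma2t y α / 3)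

/-- `n` is `y`-friable: every prime factor of `n` is at most `y`. -/
def friable (y : ℝ) (n : ℕ) : Prop := ∀ p : ℕ, p.Prime → p ∣ n → (p : ℝ) ≤ y

/-- `S(x,y)`: the set of `y`-friable integers `1 ≤ n ≤ x`. -/
def Sxy (x y : ℝ) : Finset ℕ := (Finset.Icc 1 ⌊x⌋₊).filter (friable y)

/-- `Ψ(x,y) = #S(x,y)`. -/
def Psi (x y : ℝ) : ℕ := (Sxy x y).card

/-- `D(x,y;γ) = Ψ(x,y)⁻¹ ∑_{n ∈ S(x,y)} τ(n)⁻¹ #{d ∣ n : d ≥ √n e^γ}`. -/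
def Dxy (x y γ : ℝ) : ℝ :=
  (Psi x y : ℝ)⁻¹ * ∑ n ∈ Sxy x y,
    ((n.divisors.card : ℝ))⁻¹ *
      ((n.divisors.filter (fun d => Real.sqrt n * Real.exp γ ≤ (d : ℝ))).card : ℝ)

/-- `Φ(v) = ∫_v^∞ e^{-z²/2} dz/√(2π)`. -/
def PhiGauss (v : ℝ) : ℝ :=
  ∫ z in Set.Ioi v, Real.exp (-z ^ 2 / 2) / Real.sqrt (2 * Real.pi)

/-- `g(z) = log((z^{1/2} − z^{-1/2})/log z)`, with `g(1) = 0`. -/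
def gfun (z : ℂ) : ℂ :=
  if z = 1 then 0
  else Complex.log ((z ^ (2⁻¹ : ℂ) - z ^ (-2⁻¹ : ℂ)) / Complex.log z)

/-- `Ξ(a,b) = −(1/2)log(1−a) − (1/2)log(1−b) − g((1−a)/(1−b))`. -/
def Xi (a b : ℂ) : ℂ :=
  -(2⁻¹ : ℂ) * Complex.log (1 - a) - (2⁻¹ : ℂ) * Complex.log (1 - b) -
    gfun ((1 - a) / (1 - b))

/-- `f_y(s,w) = ∑_{p ≤ y} Ξ(p^{-s}, p^{-w})`. -/
def fy (y : ℝ) (s w : ℂ) : ℂ := ∑ p ∈ primesLe y, Xi ((p : ℂ) ^ (-s)) ((p : ℂ) ^ (-w))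

/-- `F_y(s,w) = exp(f_y(s,w))`. -/
def Fy (y : ℝ) (s w : ℂ) : ℂ := Complex.exp (fy y s w)

/-- `F_y(σ,κ)` at real arguments, as a (positive) real number. -/
def FyR (y σ κ : ℝ) : ℝ := Real.exp ((fy y (σ : ℂ) (κ : ℂ)).re)

/-- `∂_{kℓ}f(s,w)`: partial derivative `k` times in the first variable and `ℓ` times
in the second. -/
def pdv (k l : ℕ) (f : ℂ → ℂ → ℂ) (s w : ℂ) : ℂ :=
  iteratedDeriv k (fun z => iteratedDeriv l (f z) w) s

/-- `Hess[f_y] = (∂₂₀f_y)(∂₀₂f_y) − (∂₁₁f_y)²`. -/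
def HessC (y : ℝ) (s w : ℂ) : ℂ :=
  pdv 2 0 (fy y) s w * pdv 0 2 (fy y) s w - (pdv 1 1 (fy y) s w) ^ 2

/-- The domain `D_δ(α;y)`. -/
def Ddom (δ α y : ℝ) : Set (ℝ × ℝ) :=
  {p | 0 < p.1 ∧ p.1 ≤ 1 ∧ 0 < p.2 ∧ p.2 ≤ 1 ∧ 0 ≤ (p.1 - α) * (α - p.2) ∧
    1 / (1 + δ) ≤ (1 - (2 : ℝ) ^ (-p.1)) / (1 - (2 : ℝ) ^ (-p.2)) ∧
    (1 - (2 : ℝ) ^ (-p.1)) / (1 - (2 : ℝ) ^ (-p.2)) ≤ 1 + δ ∧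
    |p.1 - p.2| * Real.log y ≤ δ}

/-- `φ_k(s,y)`: the `k`-th derivative in `s` of `φ₀(s,y) = −∑_{p ≤ y} log(1−p^{-s})`. -/
def phiD (y : ℝ) (k : ℕ) (s : ℂ) : ℂ :=
  iteratedDeriv k (fun z => -∑ p ∈ primesLe y, Complex.log (1 - (p : ℂ) ^ (-z))) s

/-- `φ₂(σ,y) = ∑_{p ≤ y} (log p)² p^σ/(p^σ−1)²` for real `σ`. -/
def phi2R (y σ : ℝ) : ℝ :=
  ∑ p ∈ primesLe y, (Real.log p) ^ 2 * (p : ℝ) ^ σ / ((p : ℝ) ^ σ - 1) ^ 2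


/-!
Put `q = log (1 - a) - log (1 - b)`, so that `(1 - a) / (1 - b) = exp q` with `|Im q| < π`.
On that strip `g (exp w) = log (sinh (w / 2) / (w / 2))`, an even holomorphic function
vanishing at `0`, hence `w ^ 2` times a holomorphic function. Finally
`exp q - 1 = (b - a) / (1 - b)`, and `(exp w - 1) / w` has no zero on the strip, so `q` is
`a - b` times a holomorphic function of `(a, b)`.
-/

open Topology

section

variable {𝕜 E : Type*} [NontriviallyNormedField 𝕜] [NormedAddCommGroup E] [NormedSpace 𝕜 E]

theorem deriv_zero_of_even [CharZero 𝕜] {f : 𝕜 → E} (hf : ∀ x, f (-x) = f x) :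
    deriv f 0 = 0 := by
  have h := deriv_comp_neg f (0 : 𝕜)
  simp only [hf, neg_zero] at h
  have h2 : (2 : 𝕜) • deriv f 0 = 0 := by
    rw [two_smul]; nth_rw 1 [h]; exact neg_add_cancel _
  exact (smul_eq_zero.mp h2).resolve_left two_ne_zero

theorem eq_sub_sq_smul_dslope_dslope {f : 𝕜 → E} {c : 𝕜} (h₀ : f c = 0) (h₁ : deriv f c = 0)
    (z : 𝕜) : f z = (z - c) ^ 2 • dslope (dslope f c) c z := by
  rw [pow_two, mul_smul, sub_smul_dslope, dslope_same, h₁, sub_zero, sub_smul_dslope, h₀,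
    sub_zero]

end

theorem Complex.sinh_eq_re_im (v : ℂ) :
    sinh v = Real.sinh v.re * Real.cos v.im + Real.cosh v.re * Real.sin v.im * I := by
  conv_lhs => rw [← re_add_im v, sinh_add, sinh_mul_I, cosh_mul_I]
  push_cast; ring

theorem Complex.sinh_re (v : ℂ) : (sinh v).re = Real.sinh v.re * Real.cos v.im := by
  rw [sinh_eq_re_im]
  simp only [add_re, mul_re, mul_im, ofReal_re, ofReal_im, I_re, I_im]
  ring

theorem Complex.sinh_im (v : ℂ) : (sinh v).im = Real.cosh v.re * Real.sin v.im := by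
  rw [sinh_eq_re_im]
  simp only [add_im, mul_re, mul_im, ofReal_re, ofReal_im, I_re, I_im]
  ring

theorem Real.mul_sinh_pos {x : ℝ} (hx : x ≠ 0) : 0 < x * sinh x := by
  rcases hx.lt_or_gt with h | h
  · exact mul_pos_of_neg_of_neg h (sinh_neg_iff.2 h)
  · exact mul_pos h (sinh_pos_iff.2 h)

theorem Real.mul_sin_pos {y : ℝ} (hy : y ≠ 0) (hπ : |y| < π) : 0 < y * sin y := by
  rw [abs_lt] at hπ
  rcases hy.lt_or_gt with h | h
  · exact mul_pos_of_neg_of_neg h (sin_neg_of_neg_of_neg_pi_lt h hπ.1)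
  · exact mul_pos h (sin_pos_of_pos_of_lt_pi h hπ.2)

theorem Complex.re_sinh_div_pos {v : ℂ} (hv : v ≠ 0) (him : |v.im| < π / 2) :
    0 < (sinh v / v).re := by
  have hcos : 0 < Real.cos v.im := Real.cos_pos_of_mem_Ioo (abs_lt.1 him)
  have him' : |v.im| < π := by linarith [Real.pi_pos]
  have hre : 0 ≤ v.re * Real.sinh v.re := by
    rcases eq_or_ne v.re 0 with h | h
    · simp [h]
    · exact (Real.mul_sinh_pos h).le
  have him0 : 0 ≤ v.im * Real.sin v.im := by
    rcases eq_or_ne v.im 0 with h | h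
    · simp [h]
    · exact (Real.mul_sin_pos h him').le
  suffices
      0 < Real.cos v.im * (v.re * Real.sinh v.re) + Real.cosh v.re * (v.im * Real.sin v.im) by
    rw [div_re, sinh_re, sinh_im, ← add_div]
    exact div_pos (by linarith) (normSq_pos.2 hv)
  rcases eq_or_ne v.re 0 with h | h
  · have hy : v.im ≠ 0 := fun hy => hv (ext h hy)
    nlinarith [Real.mul_sin_pos hy him', Real.cosh_pos v.re]
  · nlinarith [Real.mul_sinh_pos h, Real.cosh_pos v.re]

theorem Complex.differentiable_dslope {E : Type*} [NormedAddCommGroup E] [NormedSpace ℂ E]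
    [CompleteSpace E] {f : ℂ → E} {c : ℂ} :
    Differentiable ℂ (dslope f c) ↔ Differentiable ℂ f := by
  simp only [← differentiableOn_univ, differentiableOn_dslope Filter.univ_mem]

def sinhc : ℂ → ℂ := dslope sinh 0

theorem sinhc_of_ne {v : ℂ} (hv : v ≠ 0) : sinhc v = sinh v / v := by
  simp [sinhc, dslope_of_ne _ hv, slope_def_field]

theorem sinhc_zero : sinhc 0 = 1 := by
  simp [sinhc, dslope_same]

theorem sinhc_neg (v : ℂ) : sinhc (-v) = sinhc v := by
  rcases eq_or_ne v 0 with rfl | hv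
  · rw [neg_zero]
  · rw [sinhc_of_ne hv, sinhc_of_ne (neg_ne_zero.2 hv), sinh_neg, neg_div_neg_eq]

theorem differentiable_sinhc : Differentiable ℂ sinhc :=
  Complex.differentiable_dslope.2 differentiable_sinh

theorem re_sinhc_pos {v : ℂ} (hv : |v.im| < π / 2) : 0 < (sinhc v).re := by
  rcases eq_or_ne v 0 with rfl | h
  · simp [sinhc_zero]
  · rw [sinhc_of_ne h]
    exact re_sinh_div_pos h hv

theorem isOpen_abs_im_lt (r : ℝ) : IsOpen {w : ℂ | |w.im| < r} :=
  isOpen_lt (continuous_abs.comp continuous_im) continuous_const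

def gExp (w : ℂ) : ℂ := log (sinhc (w / 2))

theorem gExp_zero : gExp 0 = 0 := by simp [gExp, sinhc_zero]

theorem gExp_neg (w : ℂ) : gExp (-w) = gExp w := by
  rw [gExp, gExp, neg_div, sinhc_neg]

theorem differentiableOn_gExp : DifferentiableOn ℂ gExp {w : ℂ | |w.im| < π} := by
  intro w hw
  have hre : 0 < (sinhc (w / 2)).re := re_sinhc_pos (by
    rw [div_ofNat_im, abs_div, abs_two]; exact div_lt_div_of_pos_right hw two_pos)
  have hd : DifferentiableAt ℂ (fun w => sinhc (w / 2)) w :=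
    (differentiable_sinhc _).comp w (differentiableAt_id.div_const 2)
  exact (hd.clog (mem_slitPlane_iff.2 (Or.inl hre))).differentiableWithinAt

theorem gfun_exp {w : ℂ} (hw : |w.im| < π) : gfun (exp w) = gExp w := by
  have hlog : log (exp w) = w := log_exp (abs_lt.1 hw).1 (abs_lt.1 hw).2.le
  rcases eq_or_ne w 0 with rfl | h
  · simp [gfun, gExp_zero]
  have hne : exp w ≠ 1 := fun h1 => h (by rw [← hlog, h1, log_one])
  have hhalf : w / 2 ≠ 0 := div_ne_zero h two_ne_zero
  rw [gfun, if_neg hne, cpow_def_of_ne_zero (exp_ne_zero w), cpow_def_of_ne_zero (exp_ne_zero w),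
    hlog, gExp, sinhc_of_ne hhalf, sinh, div_div_eq_mul_div]
  congr 1
  ring_nf

def gExpQuot : ℂ → ℂ := dslope (dslope gExp 0) 0

theorem gExp_eq_sq_mul (w : ℂ) : gExp w = w ^ 2 * gExpQuot w := by
  simpa [gExpQuot] using eq_sub_sq_smul_dslope_dslope gExp_zero (deriv_zero_of_even gExp_neg) w

theorem analyticAt_gExpQuot {w : ℂ} (hw : |w.im| < π) : AnalyticAt ℂ gExpQuot w := by
  have hS : {w : ℂ | |w.im| < π} ∈ 𝓝 0 := (isOpen_abs_im_lt π).mem_nhds (by simp [Real.pi_pos])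
  have hd : DifferentiableOn ℂ gExpQuot {w : ℂ | |w.im| < π} :=
    (differentiableOn_dslope hS).2 <| (differentiableOn_dslope hS).2 differentiableOn_gExp
  exact (analyticOnNhd_iff_differentiableOn (isOpen_abs_im_lt π)).2 hd w hw

theorem dslope_exp_ne_zero {w : ℂ} (hw : |w.im| < π) : dslope exp 0 w ≠ 0 := by
  rcases eq_or_ne w 0 with rfl | h
  · simp [dslope_same]
  intro h0
  have h1 : exp w = 1 := sub_eq_zero.1 (by simpa [h0] using (sub_smul_dslope exp 0 w).symm)
  exact h (by rw [← log_exp (abs_lt.1 hw).1 (abs_lt.1 hw).2.le, h1, log_one])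

theorem one_sub_re_pos {a : ℂ} (ha : ‖a‖ < 1) : 0 < (1 - a).re := by
  rw [sub_re, one_re, sub_pos]
  exact (re_le_norm a).trans_lt ha

theorem one_sub_mem_slitPlane {a : ℂ} (ha : ‖a‖ < 1) : 1 - a ∈ slitPlane :=
  mem_slitPlane_iff.2 (Or.inl (one_sub_re_pos ha))

def logRatio (a b : ℂ) : ℂ := log (1 - a) - log (1 - b)

theorem exp_logRatio {a b : ℂ} (ha : ‖a‖ < 1) (hb : ‖b‖ < 1) :
    exp (logRatio a b) = (1 - a) / (1 - b) := by
  rw [logRatio, exp_sub, exp_log (slitPlane_ne_zero (one_sub_mem_slitPlane ha)),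
    exp_log (slitPlane_ne_zero (one_sub_mem_slitPlane hb))]

theorem abs_im_logRatio_lt {a b : ℂ} (ha : ‖a‖ < 1) (hb : ‖b‖ < 1) :
    |(logRatio a b).im| < π := by
  have h : ∀ {c : ℂ}, ‖c‖ < 1 → |(log (1 - c)).im| < π / 2 := fun hc =>
    log_im _ ▸ abs_arg_lt_pi_div_two_iff.2 (Or.inl (one_sub_re_pos hc))
  rw [logRatio, sub_im]
  linarith [abs_sub (log (1 - a)).im (log (1 - b)).im, h ha, h hb]

theorem analyticAt_logRatio {a b : ℂ} (ha : ‖a‖ < 1) (hb : ‖b‖ < 1) :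
    AnalyticAt ℂ (fun p : ℂ × ℂ => logRatio p.1 p.2) (a, b) :=
  ((analyticAt_const.sub analyticAt_fst).clog (one_sub_mem_slitPlane ha)).sub
    ((analyticAt_const.sub analyticAt_snd).clog (one_sub_mem_slitPlane hb))

def xi (a b : ℂ) : ℂ :=
  gExpQuot (logRatio a b) / ((1 - b) * dslope exp 0 (logRatio a b)) ^ 2

theorem analyticAt_xi {a b : ℂ} (ha : ‖a‖ < 1) (hb : ‖b‖ < 1) :
    AnalyticAt ℂ (fun p : ℂ × ℂ => xi p.1 p.2) (a, b) := by
  have hq := abs_im_logRatio_lt ha hb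
  have hquot := (analyticAt_gExpQuot hq).comp (x := (a, b)) (analyticAt_logRatio ha hb)
  have hexp := ((differentiable_dslope (c := 0)).2 differentiable_exp).analyticAt
    (logRatio a b) |>.comp (x := (a, b)) (analyticAt_logRatio ha hb)
  exact hquot.div (((analyticAt_const.sub analyticAt_snd).mul hexp).pow 2)
    (pow_ne_zero 2 (mul_ne_zero (slitPlane_ne_zero (one_sub_mem_slitPlane hb))
      (dslope_exp_ne_zero hq)))

theorem gfun_eq_sq_mul_xi {a b : ℂ} (ha : ‖a‖ < 1) (hb : ‖b‖ < 1) :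
    gfun ((1 - a) / (1 - b)) = (a - b) ^ 2 * xi a b := by
  have hb1 : 1 - b ≠ 0 := slitPlane_ne_zero (one_sub_mem_slitPlane hb)
  have hE := dslope_exp_ne_zero (abs_im_logRatio_lt ha hb)
  have hq : a - b = -((1 - b) * (logRatio a b * dslope exp 0 (logRatio a b))) := by
    have h := sub_smul_dslope exp 0 (logRatio a b)
    rw [smul_eq_mul, sub_zero, exp_zero, exp_logRatio ha hb] at h
    rw [h]; field_simp; ring
  rw [← exp_logRatio ha hb, gfun_exp (abs_im_logRatio_lt ha hb), gExp_eq_sq_mul, xi, hq]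
  field_simp

/-- Lemma 3.(ii): `g((1−a)/(1−b)) = (a−b)² ξ(a,b)` for an analytic
function `ξ` on `U²`. -/
theorem stmt6 :
    ∃ ξ : ℂ → ℂ → ℂ,
      (∀ a b : ℂ, ‖a‖ < 1 → ‖b‖ < 1 →
        AnalyticAt ℂ (fun p : ℂ × ℂ => ξ p.1 p.2) (a, b)) ∧
      ∀ a b : ℂ, ‖a‖ < 1 → ‖b‖ < 1 →
        gfun ((1 - a) / (1 - b)) = (a - b) ^ 2 * ξ a b :=
  ⟨xi, fun _ _ => analyticAt_xi, fun _ _ => gfun_eq_sq_mul_xi⟩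

end
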